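/- Let v be an aperiodic infinite binary word such that liminf_{ℓ→∞} h(ℓ)/ℓ > log 2 / log 3, so that the series Φ_ℝ(v) converges; let ζ be its sum. Then the set {T_u(ζ) : u a nonempty prefix of v} ⊆ ℝ has an accumulation point in ℝ. -/

import Mathlib

/-!
With `h = h(ℓ)`, the orbit point is `T_{v_{<ℓ}}(ζ) = 3^h / 2^ℓ · (ζ - Φ_h)`, where `Φ_h` is the
`h`-th partial sum of `Φ_ℝ(v)`; since `ζ < Φ_h`, every orbit point is negative. The density
hypothesis yields `R < 3` with `R^{h(ℓ)} / 2^ℓ → ∞`, so infinitely many `ℓ` are records from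
then on: `R^{h(ℓ)} / 2^ℓ ≤ R^{h(n)} / 2^n` for all `n ≥ ℓ`. At such an `ℓ` the later `1`s of `v`
are sparse enough for the tail `Φ_h - ζ` to be dominated by a geometric series of ratio `R / 3`,
which puts the orbit point in `[-1/(3 - R), 0]`. By compactness these points accumulate unless
one value is taken infinitely often. In that case `ζ` is rational, as distinct lengths give
distinct slopes `3^h / 2^ℓ`, and so is the whole orbit. A negative 2-adic valuation would then
drop by one at every step, which recurrence forbids; with all valuations nonnegative each digit
of `v` is read off the current orbit point, so the orbit, and with it `v`, is eventually periodic.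
-/

/-- An infinite binary word is eventually periodic if for some period `p ≥ 1`
its digits satisfy `v (n+p) = v n` from some index on. -/
def EventuallyPeriodicWord (v : ℕ → Bool) : Prop :=
  ∃ p : ℕ, 0 < p ∧ ∃ N : ℕ, ∀ n ≥ N, v (n + p) = v n

/-- The position of the `i`-th `1` (0-indexed) of the infinite binary word `v`. -/
noncomputable def onePos (v : ℕ → Bool) (i : ℕ) : ℕ :=
  Nat.nth (fun n => v n = true) i

/-- The `m`-th partial sum of the series `Φ_ℝ(v) = −∑_{i} 2^{d_i}/3^{i+1}`,
where `d_i` enumerates the positions of the `1`s of `v`. -/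
noncomputable def phiPartial (v : ℕ → Bool) (m : ℕ) : ℝ :=
  -∑ i ∈ Finset.range m, (2 : ℝ) ^ onePos v i / 3 ^ (i + 1)

/-- The number of `1`s among the first `ℓ` digits of the infinite binary word `v`. -/
def heightOfPrefix (v : ℕ → Bool) (ℓ : ℕ) : ℕ :=
  ((Finset.range ℓ).filter fun k => v k = true).card

/-- The maps `T_0(x) = x/2` and `T_1(x) = (3x+1)/2` on `ℝ`. -/
noncomputable def Tb (b : Bool) (x : ℝ) : ℝ := if b then (3 * x + 1) / 2 else x / 2

/-- For a finite binary word `u = v_0 v_1 ⋯ v_{ℓ−1}`, the composite map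
`T_u = T_{v_{ℓ−1}} ∘ ⋯ ∘ T_{v_1} ∘ T_{v_0}` on `ℝ` (first digit applied first). -/
noncomputable def Tword : List Bool → ℝ → ℝ
  | [], x => x
  | b :: u, x => Tword u (Tb b x)

/-- The prefix of length `ℓ` of an infinite binary word `v`. -/
def wordPrefix (v : ℕ → Bool) (ℓ : ℕ) : List Bool := (List.range ℓ).map v

open Filter

open Set Topology

section Orbit

variable (v : ℕ → Bool)

lemma heightOfPrefix_eq_count (ℓ : ℕ) :
    heightOfPrefix v ℓ = Nat.count (fun n => v n = true) ℓ := by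
  rw [Nat.count_eq_card_filter_range]; rfl

lemma heightOfPrefix_succ (ℓ : ℕ) :
    heightOfPrefix v (ℓ + 1) = heightOfPrefix v ℓ + if v ℓ = true then 1 else 0 := by
  simp only [heightOfPrefix_eq_count, Nat.count_succ]

lemma Tword_append (u w : List Bool) (x : ℝ) : Tword (u ++ w) x = Tword w (Tword u x) := by
  induction u generalizing x with
  | nil => rfl
  | cons b u ih => exact ih _

lemma Tword_wordPrefix_succ (ℓ : ℕ) (x : ℝ) :
    Tword (wordPrefix v (ℓ + 1)) x = Tb (v ℓ) (Tword (wordPrefix v ℓ) x) := by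
  rw [wordPrefix, List.range_succ, List.map_append, Tword_append]; rfl

theorem Tword_wordPrefix (x : ℝ) (ℓ : ℕ) :
    Tword (wordPrefix v ℓ) x =
      3 ^ heightOfPrefix v ℓ / 2 ^ ℓ * (x - phiPartial v (heightOfPrefix v ℓ)) := by
  induction ℓ with
  | zero => simp [wordPrefix, Tword, heightOfPrefix, phiPartial]
  | succ ℓ ih =>
    rw [Tword_wordPrefix_succ, ih, heightOfPrefix_succ]
    cases hb : v ℓ
    · simp only [Tb, Bool.false_eq_true, if_false, add_zero, pow_succ]
      ring
    · have hpos : onePos v (heightOfPrefix v ℓ) = ℓ := by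
        rw [heightOfPrefix_eq_count]; exact Nat.nth_count hb
      simp only [Tb, if_true, phiPartial, Finset.sum_range_succ, hpos]
      field_simp
      ring

end Orbit

section Series

variable {v : ℕ → Bool} {ζ : ℝ}

lemma hasSum_of_tendsto_phiPartial (hζ : Tendsto (phiPartial v) atTop (𝓝 ζ)) :
    HasSum (fun i => (2 : ℝ) ^ onePos v i / 3 ^ (i + 1)) (-ζ) :=
  (hasSum_iff_tendsto_nat_of_nonneg (fun _ => by positivity) _).2 <| by
    simpa [phiPartial] using hζ.neg

lemma lt_phiPartial (hζ : Tendsto (phiPartial v) atTop (𝓝 ζ)) (m : ℕ) : ζ < phiPartial v m := by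
  have hle := sum_le_hasSum (Finset.range (m + 1)) (fun _ _ => by positivity)
    (hasSum_of_tendsto_phiPartial hζ)
  have hlt : (0 : ℝ) < 2 ^ onePos v m / 3 ^ (m + 1) := by positivity
  rw [Finset.sum_range_succ] at hle
  simp only [phiPartial]
  linarith

lemma Tword_wordPrefix_neg (hζ : Tendsto (phiPartial v) atTop (𝓝 ζ)) (ℓ : ℕ) :
    Tword (wordPrefix v ℓ) ζ < 0 := by
  rw [Tword_wordPrefix]
  exact mul_neg_of_pos_of_neg (by positivity) (sub_neg.2 (lt_phiPartial hζ _))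

end Series

section LowerBound

variable {v : ℕ → Bool} {R : ℝ} {ℓ : ℕ}

lemma two_pow_onePos_le (hinf : {n | v n = true}.Infinite) (hR : 0 < R)
    (hℓ : ∀ n ≥ ℓ, R ^ heightOfPrefix v ℓ / 2 ^ ℓ ≤ R ^ heightOfPrefix v n / 2 ^ n) (j : ℕ) :
    (2 : ℝ) ^ onePos v (heightOfPrefix v ℓ + j) ≤ 2 ^ ℓ * R ^ j := by
  set d := onePos v (heightOfPrefix v ℓ + j)
  have hℓd : ℓ ≤ d := by
    rw [show d = Nat.nth _ _ from rfl, ← Nat.count_le_iff_le_nth hinf, ← heightOfPrefix_eq_count]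
    omega
  have hd : heightOfPrefix v d = heightOfPrefix v ℓ + j := by
    rw [heightOfPrefix_eq_count]; exact Nat.count_nth_of_infinite hinf _
  have hrec := hℓ d hℓd
  rw [hd, pow_add, div_le_div_iff₀ (by positivity) (by positivity), mul_assoc,
    mul_comm (R ^ j)] at hrec
  exact le_of_mul_le_mul_left hrec (by positivity)

theorem neg_inv_three_sub_le_Tword_wordPrefix (hinf : {n | v n = true}.Infinite) {ζ : ℝ}
    (hζ : Tendsto (phiPartial v) atTop (𝓝 ζ)) (hR0 : 0 < R) (hR3 : R < 3)
    (hℓ : ∀ n ≥ ℓ, R ^ heightOfPrefix v ℓ / 2 ^ ℓ ≤ R ^ heightOfPrefix v n / 2 ^ n) :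
    -(3 - R)⁻¹ ≤ Tword (wordPrefix v ℓ) ζ := by
  set k := heightOfPrefix v ℓ
  have htail : HasSum (fun j => 2 ^ onePos v (j + k) / 3 ^ (j + k + 1)) (phiPartial v k - ζ) := by
    have := (hasSum_nat_add_iff' k).2 (hasSum_of_tendsto_phiPartial hζ)
    rwa [show -ζ - _ = phiPartial v k - ζ by rw [phiPartial]; ring] at this
  have hgeom : HasSum (fun j : ℕ => (R / 3) ^ j / 3) ((1 - R / 3)⁻¹ / 3) :=
    (hasSum_geometric_of_lt_one (by positivity) (by linarith)).div_const 3
  have hterm : ∀ j : ℕ, 3 ^ k / 2 ^ ℓ * (2 ^ onePos v (j + k) / 3 ^ (j + k + 1)) ≤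
      (R / 3) ^ j / 3 := fun j =>
    calc 3 ^ k / 2 ^ ℓ * (2 ^ onePos v (j + k) / 3 ^ (j + k + 1))
        ≤ 3 ^ k / 2 ^ ℓ * (2 ^ ℓ * R ^ j / 3 ^ (j + k + 1)) := by
          rw [add_comm j k]; gcongr; exact two_pow_onePos_le hinf hR0 hℓ j
      _ = (R / 3) ^ j / 3 := by rw [div_pow]; field_simp; ring
  have hle := hasSum_le hterm (htail.mul_left (3 ^ k / 2 ^ ℓ)) hgeom
  have hR : (1 - R / 3)⁻¹ / 3 = (3 - R)⁻¹ := by field_simp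
  rw [Tword_wordPrefix]
  linarith

end LowerBound

lemma infinite_setOf_forall_ge_le {α : Type*} [LinearOrder α] {f : ℕ → α}
    (hf : Tendsto f atTop atTop) : {ℓ | ∀ n ≥ ℓ, f ℓ ≤ f n}.Infinite := by
  refine Set.infinite_of_forall_exists_gt fun a => ?_
  have hg : Tendsto (fun k => f (k + (a + 1))) cofinite atTop := by
    rw [Nat.cofinite_eq_atTop]; exact hf.comp (tendsto_add_atTop_nat _)
  obtain ⟨k, hk⟩ := hg.exists_forall_le
  refine ⟨k + (a + 1), fun n hn => ?_, by omega⟩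
  simpa [Nat.sub_add_cancel (show a + 1 ≤ n by omega)] using hk (n - (a + 1))

lemma exists_accPt_or_infinite_setOf_eq {α X : Type*} [TopologicalSpace X] {f : α → X}
    {S : Set α} (hS : S.Infinite) {K : Set X} (hK : IsCompact K) (hSK : MapsTo f S K) :
    (∃ p, AccPt p (𝓟 (f '' S))) ∨ ∃ c, {a | f a = c}.Infinite := by
  by_cases himg : (f '' S).Infinite
  · obtain ⟨p, -, hp⟩ := himg.exists_accPt_of_subset_isCompact hK (image_subset_iff.2 hSK)
    exact .inl ⟨p, hp⟩
  · by_contra! h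
    exact hS ((Set.not_infinite.1 himg).preimage' (fun c _ => h.2 c) |>.subset
      (subset_preimage_image f S))

lemma infinite_setOf_true_of_not_eventuallyPeriodicWord {v : ℕ → Bool}
    (hv : ¬ EventuallyPeriodicWord v) : {n | v n = true}.Infinite := by
  intro hfin
  obtain ⟨N, hN⟩ := hfin.bddAbove
  refine hv ⟨1, one_pos, N + 1, fun n hn => ?_⟩
  have h0 : ∀ m > N, v m = false := fun m hm =>
    Bool.eq_false_iff.2 fun h => absurd (hN h) (by omega)
  rw [h0 n (by omega), h0 (n + 1) (by omega)]

theorem exists_tendsto_pow_heightOfPrefix_div_two_pow {v : ℕ → Bool}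
    (hlim : Real.log 2 / Real.log 3 <
      liminf (fun ℓ : ℕ => (heightOfPrefix v ℓ : ℝ) / ℓ) atTop) :
    ∃ R : ℝ, 0 < R ∧ R < 3 ∧ Tendsto (fun n => R ^ heightOfPrefix v n / 2 ^ n) atTop atTop := by
  have hlog3 : 0 < Real.log 3 := Real.log_pos (by norm_num)
  obtain ⟨γ, hβγ, hγ⟩ := exists_between hlim
  have hγ0 : 0 < γ := (div_pos (Real.log_pos one_lt_two) hlog3).trans hβγ
  have hev : ∀ᶠ n : ℕ in atTop, γ * n ≤ heightOfPrefix v n := by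
    have hbdd : IsBoundedUnder (· ≥ ·) atTop (fun ℓ : ℕ => (heightOfPrefix v ℓ : ℝ) / ℓ) :=
      isBoundedUnder_of ⟨0, fun ℓ => by positivity⟩
    filter_upwards [eventually_lt_of_lt_liminf hγ hbdd, eventually_gt_atTop 0] with n hn hn0
    rw [lt_div_iff₀ (by exact_mod_cast hn0)] at hn
    exact hn.le
  obtain ⟨s, hs2, hs3⟩ : ∃ s, Real.log 2 / γ < s ∧ s < Real.log 3 :=
    exists_between (by rwa [div_lt_iff₀ hγ0, mul_comm, ← div_lt_iff₀ hlog3])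
  have hs0 : 0 ≤ s := (div_pos (Real.log_pos one_lt_two) hγ0).le.trans hs2.le
  refine ⟨Real.exp s, Real.exp_pos s, ?_, ?_⟩
  · rwa [← Real.exp_log (show (0 : ℝ) < 3 by norm_num), Real.exp_lt_exp]
  have hexp : ∀ n, Real.exp s ^ heightOfPrefix v n / 2 ^ n =
      Real.exp (s * heightOfPrefix v n - n * Real.log 2) := by
    intro n
    rw [Real.exp_sub, mul_comm s, Real.exp_nat_mul, Real.exp_nat_mul, Real.exp_log two_pos]
  simp only [hexp]
  refine Real.tendsto_exp_atTop.comp (tendsto_atTop_mono' _ ?_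
    (tendsto_natCast_atTop_atTop.const_mul_atTop (show 0 < s * γ - Real.log 2 by
      rw [div_lt_iff₀ hγ0] at hs2; linarith)))
  filter_upwards [hev] with n hn
  linarith [mul_le_mul_of_nonneg_left hn hs0]

def ratTb (b : Bool) (q : ℚ) : ℚ := if b then (3 * q + 1) / 2 else q / 2

lemma Tb_ratCast (b : Bool) (q : ℚ) : Tb b q = (ratTb b q : ℝ) := by
  cases b <;> simp [Tb, ratTb]

lemma Tword_ratCast (u : List Bool) (q : ℚ) :
    Tword u q = ((u.foldl (fun x b => ratTb b x) q : ℚ) : ℝ) := by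
  induction u generalizing q with
  | nil => rfl
  | cons b u ih => rw [Tword, Tb_ratCast, ih]; rfl

lemma padicValRat_two_two : padicValRat 2 2 = 1 := padicValRat.self one_lt_two

lemma padicValRat_two_three : padicValRat 2 3 = 0 := by simp [padicValRat]

lemma padicValRat_two_div_two {q : ℚ} (hq : q ≠ 0) :
    padicValRat 2 (q / 2) = padicValRat 2 q - 1 := by
  rw [padicValRat.div hq two_ne_zero, padicValRat_two_two]

lemma padicValRat_two_three_mul {q : ℚ} (hq : q ≠ 0) :
    padicValRat 2 (3 * q) = padicValRat 2 q := by
  rw [padicValRat.mul three_ne_zero hq, padicValRat_two_three, zero_add]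

lemma three_mul_add_one_ne_zero {q : ℚ} (hq : padicValRat 2 q ≠ 0) : 3 * q + 1 ≠ 0 := by
  intro h
  have hq0 : q ≠ 0 := by rintro rfl; simp at hq
  have := congrArg (padicValRat 2) (eq_neg_of_add_eq_zero_left h)
  rw [padicValRat_two_three_mul hq0, padicValRat.neg, padicValRat.one] at this
  exact hq this

lemma padicValRat_two_ratTb_of_neg {q : ℚ} (hq : padicValRat 2 q < 0) (b : Bool) :
    padicValRat 2 (ratTb b q) = padicValRat 2 q - 1 := by
  have hq0 : q ≠ 0 := by rintro rfl; simp at hq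
  cases b
  · exact padicValRat_two_div_two hq0
  · have h3q := three_mul_add_one_ne_zero hq.ne
    have hlt : padicValRat 2 (3 * q) < padicValRat 2 1 := by
      rwa [padicValRat_two_three_mul hq0, padicValRat.one]
    rw [ratTb, if_pos rfl, padicValRat_two_div_two h3q,
      padicValRat.add_eq_of_lt h3q (by positivity) one_ne_zero hlt, padicValRat_two_three_mul hq0]

lemma padicValRat_two_ratTb_true_of_pos {q : ℚ} (hq : 0 < padicValRat 2 q) :
    padicValRat 2 (ratTb true q) = -1 := by
  have hq0 : q ≠ 0 := by rintro rfl; simp at hq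
  have h3q := three_mul_add_one_ne_zero hq.ne'
  have hlt : padicValRat 2 1 < padicValRat 2 (3 * q) := by
    rwa [padicValRat_two_three_mul hq0, padicValRat.one]
  rw [ratTb, if_pos rfl, padicValRat_two_div_two h3q, add_comm,
    padicValRat.add_eq_of_lt (by rwa [add_comm]) one_ne_zero (by positivity) hlt,
    padicValRat.one, zero_sub]

section RatOrbit

variable {v : ℕ → Bool} {q : ℕ → ℚ}

lemma padicValRat_two_nonneg_of_infinite (hq : ∀ n, q (n + 1) = ratTb (v n) (q n)) {c : ℚ}
    (hc : {n | q n = c}.Infinite) (n : ℕ) : 0 ≤ padicValRat 2 (q n) := by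
  by_contra! hneg
  have hdecr : ∀ k : ℕ, padicValRat 2 (q (n + k)) = padicValRat 2 (q n) - k := by
    intro k
    induction k with
    | zero => simp
    | succ k ih =>
      rw [← add_assoc, hq, padicValRat_two_ratTb_of_neg (by omega), ih]
      push_cast; ring
  obtain ⟨m₁, hm₁ : q m₁ = c, hnm₁⟩ := hc.exists_gt n
  obtain ⟨m₂, hm₂ : q m₂ = c, hm₁₂⟩ := hc.exists_gt m₁
  have h₁ := hdecr (m₁ - n)
  have h₂ := hdecr (m₂ - n)
  rw [Nat.add_sub_cancel' hnm₁.le, hm₁] at h₁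
  rw [Nat.add_sub_cancel' (hnm₁.trans hm₁₂).le, hm₂] at h₂
  omega

lemma eq_decide_padicValRat_two_eq_zero (hq : ∀ n, q (n + 1) = ratTb (v n) (q n))
    (h0 : ∀ n, q n ≠ 0) (hν : ∀ n, 0 ≤ padicValRat 2 (q n)) (n : ℕ) :
    v n = decide (padicValRat 2 (q n) = 0) := by
  have hsucc := hν (n + 1)
  rw [hq] at hsucc
  cases hb : v n <;> rw [hb] at hsucc
  · rw [ratTb, if_neg Bool.false_ne_true, padicValRat_two_div_two (h0 n)] at hsucc
    simp only [Bool.false_eq, decide_eq_false_iff_not]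
    omega
  · by_contra hne
    have hpos : 0 < padicValRat 2 (q n) := lt_of_le_of_ne (hν n) (Ne.symm (by simpa using hne))
    rw [padicValRat_two_ratTb_true_of_pos hpos] at hsucc
    omega

theorem eventuallyPeriodicWord_of_ratTb_orbit (hq : ∀ n, q (n + 1) = ratTb (v n) (q n))
    (h0 : ∀ n, q n ≠ 0) {c : ℚ} (hc : {n | q n = c}.Infinite) : EventuallyPeriodicWord v := by
  have hdigit := eq_decide_padicValRat_two_eq_zero hq h0 (padicValRat_two_nonneg_of_infinite hq hc)
  obtain ⟨ℓ₁, hℓ₁ : q ℓ₁ = c⟩ := hc.nonempty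
  obtain ⟨ℓ₂, hℓ₂ : q ℓ₂ = c, hℓ₁₂⟩ := hc.exists_gt ℓ₁
  have hper : ∀ n ≥ ℓ₁, q (n + (ℓ₂ - ℓ₁)) = q n := by
    intro n hn
    induction n, hn using Nat.le_induction with
    | base => rw [Nat.add_sub_cancel' hℓ₁₂.le, hℓ₁, hℓ₂]
    | succ n _ ih => rw [Nat.add_right_comm, hq, hq, hdigit, hdigit n, ih]
  exact ⟨ℓ₂ - ℓ₁, by omega, ℓ₁, fun n hn => by rw [hdigit, hdigit, hper n hn]⟩

end RatOrbit

lemma padicValRat_two_three_pow_div_two_pow (k ℓ : ℕ) :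
    padicValRat 2 (3 ^ k / 2 ^ ℓ) = -ℓ := by
  rw [padicValRat.div (by positivity) (by positivity), padicValRat.pow, padicValRat.pow,
    padicValRat_two_three, padicValRat_two_two]
  ring

section RealOrbit

variable {v : ℕ → Bool} {ζ : ℝ}

lemma exists_rat_eq_of_Tword_wordPrefix_eq {ℓ₁ ℓ₂ : ℕ} (hℓ : ℓ₁ ≠ ℓ₂)
    (h : Tword (wordPrefix v ℓ₁) ζ = Tword (wordPrefix v ℓ₂) ζ) : ∃ r : ℚ, ζ = r := by
  set A : ℕ → ℚ := fun ℓ => 3 ^ heightOfPrefix v ℓ / 2 ^ ℓ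
  set P : ℕ → ℚ := fun ℓ => -∑ i ∈ Finset.range (heightOfPrefix v ℓ), 2 ^ onePos v i / 3 ^ (i + 1)
  have hT : ∀ ℓ, Tword (wordPrefix v ℓ) ζ = A ℓ * (ζ - P ℓ) := by
    intro ℓ; simp [A, P, Tword_wordPrefix, phiPartial]
  have hA : (A ℓ₁ : ℝ) - A ℓ₂ ≠ 0 := by
    rw [← Rat.cast_sub, Rat.cast_ne_zero, sub_ne_zero]
    intro hA
    have := congrArg (padicValRat 2) hA
    simp only [A, padicValRat_two_three_pow_div_two_pow] at this
    omega
  refine ⟨(A ℓ₁ * P ℓ₁ - A ℓ₂ * P ℓ₂) / (A ℓ₁ - A ℓ₂), ?_⟩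
  rw [hT, hT] at h
  push_cast
  field_simp
  linarith

theorem eventuallyPeriodicWord_of_infinite_setOf_Tword_wordPrefix_eq
    (hζ : Tendsto (phiPartial v) atTop (𝓝 ζ)) {c : ℝ}
    (hc : {n | Tword (wordPrefix v n) ζ = c}.Infinite) : EventuallyPeriodicWord v := by
  obtain ⟨ℓ₁, hℓ₁ : Tword (wordPrefix v ℓ₁) ζ = c⟩ := hc.nonempty
  obtain ⟨ℓ₂, hℓ₂ : Tword (wordPrefix v ℓ₂) ζ = c, hℓ₁₂⟩ := hc.exists_gt ℓ₁
  obtain ⟨r, rfl⟩ := exists_rat_eq_of_Tword_wordPrefix_eq hℓ₁₂.ne (hℓ₁.trans hℓ₂.symm)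
  set q : ℕ → ℚ := fun n => (wordPrefix v n).foldl (fun x b => ratTb b x) r
  have hcast : ∀ n, Tword (wordPrefix v n) r = q n := fun n => Tword_ratCast _ r
  refine eventuallyPeriodicWord_of_ratTb_orbit (q := q) (c := q ℓ₁) (fun n => ?_) (fun n => ?_)
    (hc.mono fun n (hn : _ = c) => ?_)
  · simp [q, wordPrefix, List.range_succ, List.foldl_append]
  · have := Tword_wordPrefix_neg hζ n
    rw [hcast] at this
    exact_mod_cast this.ne
  · show q n = q ℓ₁
    exact_mod_cast (hcast n).symm.trans (hn.trans ((hcast ℓ₁) ▸ hℓ₁).symm)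

end RealOrbit

/-- If `v` is aperiodic with `liminf h(ℓ)/ℓ > log 2 / log 3` and the series
`Φ_ℝ(v)` converges to `ζ`, then the set `{T_u(ζ) : u a nonempty prefix of v}`
has an accumulation point in `ℝ`. -/
theorem stmt12 (v : ℕ → Bool) (hv : ¬ EventuallyPeriodicWord v)
    (hlim : Real.log 2 / Real.log 3 <
      liminf (fun ℓ : ℕ => (heightOfPrefix v ℓ : ℝ) / ℓ) atTop)
    (ζ : ℝ) (hζ : Tendsto (phiPartial v) atTop (nhds ζ)) :
    ∃ p : ℝ, AccPt p (Filter.principal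
      {y : ℝ | ∃ ℓ : ℕ, 1 ≤ ℓ ∧ Tword (wordPrefix v ℓ) ζ = y}) := by
  have hinf := infinite_setOf_true_of_not_eventuallyPeriodicWord hv
  obtain ⟨R, hR0, hR3, hR⟩ := exists_tendsto_pow_heightOfPrefix_div_two_pow hlim
  set S := {ℓ | 1 ≤ ℓ ∧ ∀ n ≥ ℓ, R ^ heightOfPrefix v ℓ / 2 ^ ℓ ≤ R ^ heightOfPrefix v n / 2 ^ n}
  have hS : S.Infinite := ((infinite_setOf_forall_ge_le hR).sdiff (finite_singleton 0)).mono
    fun ℓ hℓ => ⟨Nat.one_le_iff_ne_zero.2 hℓ.2, hℓ.1⟩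
  have hSK : MapsTo (fun ℓ => Tword (wordPrefix v ℓ) ζ) S (Icc (-(3 - R)⁻¹) 0) := fun ℓ hℓ =>
    ⟨neg_inv_three_sub_le_Tword_wordPrefix hinf hζ hR0 hR3 hℓ.2, (Tword_wordPrefix_neg hζ ℓ).le⟩
  rcases exists_accPt_or_infinite_setOf_eq hS isCompact_Icc hSK with ⟨p, hp⟩ | ⟨c, hc⟩
  · exact ⟨p, hp.mono (principal_mono.2 (image_subset_iff.2 fun ℓ hℓ => ⟨ℓ, hℓ.1, rfl⟩))⟩
  · exact (hv (eventuallyPeriodicWord_of_infinite_setOf_Tword_wordPrefix_eq hζ hc)).elim
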